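/- Let T be a power partial isometry on a Hilbert space H. Then the closed subspace PH = ⋂_{n≥1} T^n H is reducing for T (invariant under both T and T*), and the restriction of T to PH is a co-isometry, i.e., T* restricted to PH is an isometry. -/

import Mathlib

/-!
Since every `Tⁿ` is a partial isometry, `Tⁿ Tⁿ*` is the orthogonal projection onto `Tⁿ H`, and `T`
and `T*` are contractions. If `x ∈ Tⁿ⁺¹ H`, then `y = T* x` satisfies
`‖y‖ = ‖x‖` and `x = T (Tⁿ Tⁿ* y)`, hence `‖y‖ ≤ ‖Tⁿ Tⁿ* y‖ ≤ ‖y‖`; a vector whose norm an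
orthogonal projection preserves lies in its range, so `T* x ∈ Tⁿ H`.
-/

open ContinuousLinearMap

def IsPartialIsometry {R : Type*} [Mul R] [Star R] (a : R) : Prop :=
  a * star a * a = a

def IsPowerPartialIsometry {R : Type*} [Monoid R] [Star R] (a : R) : Prop :=
  ∀ n : ℕ, IsPartialIsometry (a ^ n)

namespace IsPartialIsometry

section Algebraic

variable {R : Type*} [Semigroup R] [StarMul R] {a : R}

protected theorem star (ha : IsPartialIsometry a) : IsPartialIsometry (star a) := by
  simpa [IsPartialIsometry, mul_assoc] using congr(star $ha)

theorem isStarProjection_mul_star (ha : IsPartialIsometry a) : IsStarProjection (a * star a) where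
  isIdempotentElem := by
    rw [IsIdempotentElem, ← mul_assoc, ha]
  isSelfAdjoint := by
    rw [IsSelfAdjoint, star_mul, star_star]

theorem isStarProjection_star_mul (ha : IsPartialIsometry a) : IsStarProjection (star a * a) where
  isIdempotentElem := by
    rw [IsIdempotentElem, mul_assoc, ← mul_assoc a, ha]
  isSelfAdjoint := by
    rw [IsSelfAdjoint, star_mul, star_star]

end Algebraic

theorem norm_le_one {R : Type*} [NonUnitalNormedRing R] [StarRing R] [CStarRing R] {a : R}
    (ha : IsPartialIsometry a) : ‖a‖ ≤ 1 := by
  have h : ‖a‖ * ‖a‖ ≤ 1 :=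
    CStarRing.norm_star_mul_self (x := a) ▸ ha.isStarProjection_star_mul.norm_le
  nlinarith [norm_nonneg a]

variable {H : Type*} [NormedAddCommGroup H] [InnerProductSpace ℂ H] [CompleteSpace H]
  {T : H →L[ℂ] H}

theorem norm_apply_le (hT : IsPartialIsometry T) (x : H) : ‖T x‖ ≤ ‖x‖ :=
  T.le_of_opNorm_le hT.norm_le_one x |>.trans_eq (one_mul _)

theorem apply_star_apply_of_mem_range (hT : IsPartialIsometry T) {x : H}
    (hx : x ∈ LinearMap.range (T : H →ₗ[ℂ] H)) : T (star T x) = x := by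
  obtain ⟨y, rfl⟩ := hx
  exact congr($hT y)

theorem norm_star_apply_of_mem_range (hT : IsPartialIsometry T) {x : H}
    (hx : x ∈ LinearMap.range (T : H →ₗ[ℂ] H)) : ‖star T x‖ = ‖x‖ := by
  refine le_antisymm (hT.star.norm_apply_le x) ?_
  calc ‖x‖ = ‖T (star T x)‖ := by rw [hT.apply_star_apply_of_mem_range hx]
    _ ≤ ‖star T x‖ := hT.norm_apply_le _

end IsPartialIsometry

theorem ContinuousLinearMap.mem_range_of_mem_range_pow_succ {R E : Type*} [Semiring R]
    [TopologicalSpace E] [AddCommMonoid E] [Module R E] {T : E →L[R] E} {n : ℕ} {x : E}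
    (hx : x ∈ LinearMap.range ((T ^ (n + 1) : E →L[R] E) : E →ₗ[R] E)) :
    x ∈ LinearMap.range (T : E →ₗ[R] E) := by
  obtain ⟨y, rfl⟩ := hx
  exact ⟨(T ^ n) y, by rw [pow_succ']; rfl⟩

theorem IsStarProjection.apply_eq_self_of_norm_le {H : Type*} [NormedAddCommGroup H]
    [InnerProductSpace ℂ H] [CompleteSpace H] {p : H →L[ℂ] H} (hp : IsStarProjection p) {v : H}
    (hv : ‖v‖ ≤ ‖p v‖) : p v = v := by
  obtain ⟨K, _, rfl⟩ := isStarProjection_iff_eq_starProjection.mp hp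
  refine K.starProjection_eq_self_iff.mpr ((K.mem_iff_norm_starProjection v).mpr ?_)
  exact le_antisymm (K.norm_starProjection_apply_le v) hv

namespace IsPowerPartialIsometry

theorem isPartialIsometry {R : Type*} [Monoid R] [Star R] {a : R} (ha : IsPowerPartialIsometry a) :
    IsPartialIsometry a := by
  simpa using ha 1

variable {H : Type*} [NormedAddCommGroup H] [InnerProductSpace ℂ H] [CompleteSpace H]
  {T : H →L[ℂ] H}

theorem star_apply_mem_range_pow (hT : IsPowerPartialIsometry T) {n : ℕ} {x : H}
    (hx : x ∈ LinearMap.range ((T ^ (n + 1) : H →L[ℂ] H) : H →ₗ[ℂ] H)) :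
    star T x ∈ LinearMap.range ((T ^ n : H →L[ℂ] H) : H →ₗ[ℂ] H) := by
  have hT₁ := hT.isPartialIsometry
  set y := star T x
  set E := T ^ n * star (T ^ n)
  have hxE : T (E y) = x := by
    have hfix := (hT (n + 1)).apply_star_apply_of_mem_range hx
    rwa [pow_succ', star_mul, mul_apply_eq_comp, mul_apply_eq_comp] at hfix
  have hEy : E y = y := by
    refine (hT n).isStarProjection_mul_star.apply_eq_self_of_norm_le ?_
    calc ‖y‖ = ‖x‖ := hT₁.norm_star_apply_of_mem_range (mem_range_of_mem_range_pow_succ hx)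
      _ = ‖T (E y)‖ := by rw [hxE]
      _ ≤ ‖E y‖ := hT₁.norm_apply_le _
  exact ⟨star (T ^ n) y, hEy⟩

end IsPowerPartialIsometry

/-- For a power partial isometry `T`, the subspace `⋂_{n≥1} T^n H` is reducing for
`T`, and the restriction of `T` to it is a co-isometry. -/
theorem inter_range_reducing_coisometry
    {H : Type*} [NormedAddCommGroup H] [InnerProductSpace ℂ H] [CompleteSpace H]
    (T : H →L[ℂ] H)
    (hT : ∀ n : ℕ, T ^ n * (adjoint T) ^ n * T ^ n = T ^ n) :
    (∀ x ∈ ⨅ n : ℕ, LinearMap.range ((T ^ (n + 1) : H →L[ℂ] H) : H →ₗ[ℂ] H),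
        T x ∈ ⨅ n : ℕ, LinearMap.range ((T ^ (n + 1) : H →L[ℂ] H) : H →ₗ[ℂ] H)) ∧
    (∀ x ∈ ⨅ n : ℕ, LinearMap.range ((T ^ (n + 1) : H →L[ℂ] H) : H →ₗ[ℂ] H),
        adjoint T x ∈ ⨅ n : ℕ, LinearMap.range ((T ^ (n + 1) : H →L[ℂ] H) : H →ₗ[ℂ] H)) ∧
    (∀ x ∈ ⨅ n : ℕ, LinearMap.range ((T ^ (n + 1) : H →L[ℂ] H) : H →ₗ[ℂ] H), ‖adjoint T x‖ = ‖x‖) := by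
  have hPPI : IsPowerPartialIsometry T := fun n => by
    rw [IsPartialIsometry, star_pow, star_eq_adjoint]
    exact hT n
  have hT₁ := hPPI.isPartialIsometry
  simp only [Submodule.mem_iInf, ← star_eq_adjoint]
  refine ⟨fun x hx n => ?_, fun x hx n => hPPI.star_apply_mem_range_pow (hx (n + 1)),
    fun x hx => hT₁.norm_star_apply_of_mem_range (mem_range_of_mem_range_pow_succ (hx 0))⟩
  obtain ⟨y, rfl⟩ := hx n
  exact ⟨T y, congr($(pow_mul_comm' T (n + 1)) y)⟩
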